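/- arXiv:2508.17193 — 2 statements merged into one kernel-verified Lean document; each statement's English description precedes it below -/
import Mathlib

section
/- Let A be an m×m nonnegative matrix decomposed as A = A₋₁ + A₀ + A₁ with nonnegative blocks, and let Ã be the ℤ-indexed block-tridiagonal operator with blocks A₋₁, A₀, A₁ (Ã_{(i,j),(i',j')} = (A_{j'-j})_{i,i'} for |j'-j| ≤ 1, else 0). Then for every n ≥ 1 and all indices, (Ãⁿ)_{(i,j),(i',j')} ≤ (Aⁿ)_{i,i'}. -/
open scoped Classical in
/-- Powers of a (countably indexed) matrix, with entrywise `tsum`. -/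
noncomputable def matPowR {I : Type*} (A : I → I → ℝ) : ℕ → I → I → ℝ
  | 0 => fun i j => if i = j then 1 else 0
  | n + 1 => fun i j => ∑' k, matPowR A n i k * A k j

section aux
variable {m : ℕ} (A Am1 A0 A1 : Matrix (Fin m) (Fin m) ℝ)

private lemma tilde_nonneg
    (hAm1 : ∀ i j, 0 ≤ Am1 i j) (hA0 : ∀ i j, 0 ≤ A0 i j) (hA1 : ∀ i j, 0 ≤ A1 i j)
    (p q : Fin m × ℤ) :
    0 ≤ (if q.2 = p.2 - 1 then Am1 p.1 q.1
            else if q.2 = p.2 then A0 p.1 q.1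
            else if q.2 = p.2 + 1 then A1 p.1 q.1 else 0) := by
  split_ifs
  · exact hAm1 _ _
  · exact hA0 _ _
  · exact hA1 _ _
  · exact le_refl 0

private lemma pow_nonneg'
    (hAm1 : ∀ i j, 0 ≤ Am1 i j) (hA0 : ∀ i j, 0 ≤ A0 i j) (hA1 : ∀ i j, 0 ≤ A1 i j) :
    ∀ n (p q : Fin m × ℤ),
      0 ≤ matPowR (fun p q : Fin m × ℤ =>
          if q.2 = p.2 - 1 then Am1 p.1 q.1
            else if q.2 = p.2 then A0 p.1 q.1
            else if q.2 = p.2 + 1 then A1 p.1 q.1 else 0) n p q := by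
  intro n
  induction n with
  | zero =>
    intro p q
    simp only [matPowR]
    split_ifs <;> norm_num
  | succ n ih =>
    intro p q
    simp only [matPowR]
    exact tsum_nonneg fun k => mul_nonneg (ih _ _) (tilde_nonneg Am1 A0 A1 hAm1 hA0 hA1 _ _)

private lemma main_bound
    (hAm1 : ∀ i j, 0 ≤ Am1 i j) (hA0 : ∀ i j, 0 ≤ A0 i j) (hA1 : ∀ i j, 0 ≤ A1 i j)
    (hsum : A = Am1 + A0 + A1) :
    ∀ n (i i' : Fin m) (j j' : ℤ),
      matPowR (fun p q : Fin m × ℤ =>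
          if q.2 = p.2 - 1 then Am1 p.1 q.1
            else if q.2 = p.2 then A0 p.1 q.1
            else if q.2 = p.2 + 1 then A1 p.1 q.1 else 0) n (i, j) (i', j')
        ≤ (A ^ n) i i' := by
  set T : (Fin m × ℤ) → (Fin m × ℤ) → ℝ := fun p q =>
      if q.2 = p.2 - 1 then Am1 p.1 q.1
        else if q.2 = p.2 then A0 p.1 q.1
        else if q.2 = p.2 + 1 then A1 p.1 q.1 else 0 with hT
  intro n
  induction n with
  | zero =>
    intro i i' j j'
    simp only [matPowR, pow_zero, Matrix.one_apply]
    split_ifs with h1 h2 h2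
    · exact le_refl 1
    · exact absurd (congrArg Prod.fst h1) h2
    · norm_num
    · exact le_refl 0
  | succ n ih =>
    intro i i' j j'
    simp only [matPowR]
    set P := matPowR T n with hP
    have hPnn : ∀ p q, 0 ≤ P p q := pow_nonneg' Am1 A0 A1 hAm1 hA0 hA1 n
    have hTnn : ∀ p q, 0 ≤ T p q := tilde_nonneg Am1 A0 A1 hAm1 hA0 hA1
    -- support finiteness
    set s : Finset (Fin m × ℤ) := Finset.univ ×ˢ ({j' - 1, j', j' + 1} : Finset ℤ) with hs
    have hzero : ∀ k ∉ s, P (i, j) k * T k (i', j') = 0 := by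
      intro k hk
      have hk2 : k.2 ≠ j' - 1 ∧ k.2 ≠ j' ∧ k.2 ≠ j' + 1 := by
        simp only [hs, Finset.mem_product, Finset.mem_univ, true_and,
          Finset.mem_insert, Finset.mem_singleton, not_or] at hk
        exact hk
      have : T k (i', j') = 0 := by
        simp only [hT]
        split_ifs with h1 h2 h3
        · omega
        · omega
        · omega
        · rfl
      rw [this, mul_zero]
    rw [tsum_eq_sum hzero]
    have hsplit : ∑ k ∈ s, P (i, j) k * T k (i', j')
        = ∑ k1 : Fin m, ∑ k2 ∈ ({j' - 1, j', j' + 1} : Finset ℤ),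
            P (i, j) (k1, k2) * T (k1, k2) (i', j') := by
      rw [hs, Finset.sum_product]
    rw [hsplit]
    have hA : (A ^ (n + 1)) i i' = ∑ k1 : Fin m, (A ^ n) i k1 * A k1 i' := by
      rw [pow_succ, Matrix.mul_apply]
    rw [hA]
    apply Finset.sum_le_sum
    intro k1 _
    have hne1 : (j' - 1 : ℤ) ∉ ({j', j' + 1} : Finset ℤ) := by
      simp; omega
    have hne2 : (j' : ℤ) ∉ ({j' + 1} : Finset ℤ) := by
      simp
    rw [Finset.sum_insert hne1, Finset.sum_insert hne2, Finset.sum_singleton]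
    have e1 : T (k1, j' - 1) (i', j') = A1 k1 i' := by
      simp only [hT]; split_ifs <;> first | rfl | omega
    have e2 : T (k1, j') (i', j') = A0 k1 i' := by
      simp only [hT]; split_ifs <;> first | rfl | omega
    have e3 : T (k1, j' + 1) (i', j') = Am1 k1 i' := by
      simp only [hT]; split_ifs <;> first | rfl | omega
    have hAk : A k1 i' = Am1 k1 i' + A0 k1 i' + A1 k1 i' := by
      rw [hsum]; simp [Matrix.add_apply]
    rw [e1, e2, e3, hAk, mul_add, mul_add]
    have b1 : P (i, j) (k1, j' - 1) * A1 k1 i' ≤ (A ^ n) i k1 * A1 k1 i' :=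
      mul_le_mul_of_nonneg_right (ih i k1 j (j' - 1)) (hA1 _ _)
    have b2 : P (i, j) (k1, j') * A0 k1 i' ≤ (A ^ n) i k1 * A0 k1 i' :=
      mul_le_mul_of_nonneg_right (ih i k1 j j') (hA0 _ _)
    have b3 : P (i, j) (k1, j' + 1) * Am1 k1 i' ≤ (A ^ n) i k1 * Am1 k1 i' :=
      mul_le_mul_of_nonneg_right (ih i k1 j (j' + 1)) (hAm1 _ _)
    linarith [b1, b2, b3]

end aux

/-- For `A = A₋₁ + A₀ + A₁` with nonnegative blocks and `Ã` the ℤ-indexed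
block-tridiagonal operator with blocks `A₋₁, A₀, A₁`, every entry of `Ãⁿ` is
dominated by the corresponding entry of `Aⁿ`. -/
theorem stmt3 {m : ℕ} (A Am1 A0 A1 : Matrix (Fin m) (Fin m) ℝ)
    (hAm1 : ∀ i j, 0 ≤ Am1 i j) (hA0 : ∀ i j, 0 ≤ A0 i j) (hA1 : ∀ i j, 0 ≤ A1 i j)
    (hsum : A = Am1 + A0 + A1) :
    ∀ n : ℕ, 1 ≤ n → ∀ (i i' : Fin m) (j j' : ℤ),
      matPowR (fun p q : Fin m × ℤ =>
          if q.2 = p.2 - 1 then Am1 p.1 q.1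
            else if q.2 = p.2 then A0 p.1 q.1
            else if q.2 = p.2 + 1 then A1 p.1 q.1 else 0) n (i, j) (i', j')
        ≤ (A ^ n) i i' := by
  intro n _ i i' j j'
  exact main_bound A Am1 A0 A1 hAm1 hA0 hA1 hsum n i i' j j'
end

section
/- Let M₀, M₁, M₂ be m×m nonnegative matrices with M₁ irreducible and aperiodic, and with M₀ ≠ 0 and M₂ ≠ 0. Define the ℤ-indexed block-tridiagonal matrix M̃ with diagonal blocks M₁, super-diagonal blocks M₂, and sub-diagonal blocks M₀. Then M̃ is irreducible and aperiodic: for every pair of indices (i,j), (i',j') there exists N ≥ 1 with (M̃^N)_{(i,j),(i',j')} > 0, and the period of M̃ is 1. -/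
/-- The ℤ-indexed block-tridiagonal matrix `M̃` with diagonal blocks `M₁`,
super-diagonal blocks `M₂`, and sub-diagonal blocks `M₀`. -/
noncomputable def blockTri {m : ℕ} (M0 M1 M2 : Matrix (Fin m) (Fin m) ℝ) :
    (Fin m × ℤ) → (Fin m × ℤ) → ℝ :=
  fun p q =>
    if q.2 = p.2 then M1 p.1 q.1
    else if q.2 = p.2 + 1 then M2 p.1 q.1
    else if q.2 = p.2 - 1 then M0 p.1 q.1 else 0

section Aux

variable {m : ℕ} {M0 M1 M2 : Matrix (Fin m) (Fin m) ℝ}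

lemma bt_nonneg (hM0 : ∀ i j, 0 ≤ M0 i j) (hM1 : ∀ i j, 0 ≤ M1 i j)
    (hM2 : ∀ i j, 0 ≤ M2 i j) (p q : Fin m × ℤ) : 0 ≤ blockTri M0 M1 M2 p q := by
  unfold blockTri
  split_ifs with h1 h2 h3
  · exact hM1 _ _
  · exact hM2 _ _
  · exact hM0 _ _
  · exact le_refl 0

lemma bt_zero_of_far (p q : Fin m × ℤ) (h : p.2 ≠ q.2 ∧ p.2 ≠ q.2 - 1 ∧ p.2 ≠ q.2 + 1) :
    blockTri M0 M1 M2 p q = 0 := by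
  unfold blockTri
  rw [if_neg (by omega), if_neg (by omega), if_neg (by omega)]

lemma bt_summable (hM0 : ∀ i j, 0 ≤ M0 i j) (hM1 : ∀ i j, 0 ≤ M1 i j)
    (hM2 : ∀ i j, 0 ≤ M2 i j) (n : ℕ) (p q : Fin m × ℤ) :
    Summable (fun k => matPowR (blockTri M0 M1 M2) n p k * blockTri M0 M1 M2 k q) := by
  apply summable_of_ne_finset_zero
    (s := (Finset.univ : Finset (Fin m)) ×ˢ ({q.2 - 1, q.2, q.2 + 1} : Finset ℤ))
  intro k hk
  have hk2 : k.2 ∉ ({q.2 - 1, q.2, q.2 + 1} : Finset ℤ) := by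
    intro h
    exact hk (Finset.mem_product.mpr ⟨Finset.mem_univ _, h⟩)
  simp only [Finset.mem_insert, Finset.mem_singleton] at hk2
  push_neg at hk2
  rw [bt_zero_of_far k q ⟨by omega, by omega, by omega⟩, mul_zero]

lemma matPowR_nonneg (hM0 : ∀ i j, 0 ≤ M0 i j) (hM1 : ∀ i j, 0 ≤ M1 i j)
    (hM2 : ∀ i j, 0 ≤ M2 i j) : ∀ (n : ℕ) (p q : Fin m × ℤ),
    0 ≤ matPowR (blockTri M0 M1 M2) n p q := by
  intro n
  induction n with
  | zero =>
    intro p q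
    unfold matPowR
    split_ifs <;> norm_num
  | succ n ih =>
    intro p q
    show (0:ℝ) ≤ ∑' k, matPowR (blockTri M0 M1 M2) n p k * blockTri M0 M1 M2 k q
    exact tsum_nonneg fun k => mul_nonneg (ih p k) (bt_nonneg hM0 hM1 hM2 k q)

lemma matPowR_step (hM0 : ∀ i j, 0 ≤ M0 i j) (hM1 : ∀ i j, 0 ≤ M1 i j)
    (hM2 : ∀ i j, 0 ≤ M2 i j) {n : ℕ} {p k q : Fin m × ℤ}
    (h1 : 0 < matPowR (blockTri M0 M1 M2) n p k) (h2 : 0 < blockTri M0 M1 M2 k q) :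
    0 < matPowR (blockTri M0 M1 M2) (n + 1) p q := by
  show (0:ℝ) < ∑' k', matPowR (blockTri M0 M1 M2) n p k' * blockTri M0 M1 M2 k' q
  refine lt_of_lt_of_le (mul_pos h1 h2) ?_
  exact Summable.le_tsum (bt_summable hM0 hM1 hM2 n p q) k
    (fun j _ => mul_nonneg (matPowR_nonneg hM0 hM1 hM2 n p j) (bt_nonneg hM0 hM1 hM2 j q))

lemma matPowR_exists (hM0 : ∀ i j, 0 ≤ M0 i j) (hM1 : ∀ i j, 0 ≤ M1 i j)
    (hM2 : ∀ i j, 0 ≤ M2 i j) {n : ℕ} {p q : Fin m × ℤ}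
    (h : 0 < matPowR (blockTri M0 M1 M2) (n + 1) p q) :
    ∃ k, 0 < matPowR (blockTri M0 M1 M2) n p k ∧ 0 < blockTri M0 M1 M2 k q := by
  by_contra hc
  push_neg at hc
  have hz : ∀ k, matPowR (blockTri M0 M1 M2) n p k * blockTri M0 M1 M2 k q = 0 := by
    intro k
    rcases lt_or_eq_of_le (matPowR_nonneg hM0 hM1 hM2 n p k) with hlt | heq
    · have := hc k hlt
      have := bt_nonneg hM0 hM1 hM2 k q
      have : blockTri M0 M1 M2 k q = 0 := le_antisymm ‹_› ‹_›
      rw [this, mul_zero]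
    · rw [← heq, zero_mul]
  have : matPowR (blockTri M0 M1 M2) (n + 1) p q = 0 := by
    show (∑' k, matPowR (blockTri M0 M1 M2) n p k * blockTri M0 M1 M2 k q) = 0
    rw [tsum_congr hz, tsum_zero]
  rw [this] at h
  exact lt_irrefl 0 h

lemma matPowR_compose (hM0 : ∀ i j, 0 ≤ M0 i j) (hM1 : ∀ i j, 0 ≤ M1 i j)
    (hM2 : ∀ i j, 0 ≤ M2 i j) {a : ℕ} (b : ℕ) {p k : Fin m × ℤ}
    (h1 : 0 < matPowR (blockTri M0 M1 M2) a p k) :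
    ∀ q, 0 < matPowR (blockTri M0 M1 M2) b k q →
      0 < matPowR (blockTri M0 M1 M2) (a + b) p q := by
  induction b with
  | zero =>
    intro q h2
    have : k = q := by
      by_contra hne
      have : matPowR (blockTri M0 M1 M2) 0 k q = 0 := by
        unfold matPowR; rw [if_neg hne]
      rw [this] at h2; exact lt_irrefl 0 h2
    rw [← this]; exact h1
  | succ b ih =>
    intro q h2
    obtain ⟨k', hk'1, hk'2⟩ := matPowR_exists hM0 hM1 hM2 h2
    exact matPowR_step hM0 hM1 hM2 (ih k' hk'1) hk'2

lemma M1pow_nonneg (hM1 : ∀ i j, 0 ≤ M1 i j) (N : ℕ) (i j : Fin m) :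
    0 ≤ (M1 ^ N) i j := by
  induction N generalizing i j with
  | zero =>
    rw [pow_zero, Matrix.one_apply]
    split_ifs <;> norm_num
  | succ N ih =>
    rw [pow_succ, Matrix.mul_apply]
    exact Finset.sum_nonneg fun k _ => mul_nonneg (ih i k) (hM1 k j)

lemma lift_M1 (hM0 : ∀ i j, 0 ≤ M0 i j) (hM1 : ∀ i j, 0 ≤ M1 i j)
    (hM2 : ∀ i j, 0 ≤ M2 i j) (N : ℕ) :
    ∀ (i i' : Fin m) (j : ℤ), 0 < (M1 ^ N) i i' →
      0 < matPowR (blockTri M0 M1 M2) N (i, j) (i', j) := by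
  induction N with
  | zero =>
    intro i i' j h
    rw [pow_zero, Matrix.one_apply] at h
    split_ifs at h with he
    · subst he
      unfold matPowR
      rw [if_pos rfl]; norm_num
    · exact absurd h (lt_irrefl 0)
  | succ N ih =>
    intro i i' j h
    rw [pow_succ, Matrix.mul_apply] at h
    have : ∃ k, 0 < (M1 ^ N) i k ∧ 0 < M1 k i' := by
      by_contra hc
      push_neg at hc
      have hz : ∀ k ∈ Finset.univ, (M1 ^ N) i k * M1 k i' = 0 := by
        intro k _
        rcases lt_or_eq_of_le (M1pow_nonneg hM1 N i k) with hlt | heq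
        · have := le_antisymm (hc k hlt) (hM1 k i')
          rw [this, mul_zero]
        · rw [← heq, zero_mul]
      rw [Finset.sum_eq_zero hz] at h
      exact lt_irrefl 0 h
    obtain ⟨k, hk1, hk2⟩ := this
    refine matPowR_step hM0 hM1 hM2 (ih i k j hk1) ?_
    show 0 < blockTri M0 M1 M2 (k, j) (i', j)
    unfold blockTri
    simpa using hk2

/-- Reachability. -/
def ReachBT (M0 M1 M2 : Matrix (Fin m) (Fin m) ℝ) (p q : Fin m × ℤ) : Prop :=
  ∃ N : ℕ, 1 ≤ N ∧ 0 < matPowR (blockTri M0 M1 M2) N p q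

lemma reach_trans (hM0 : ∀ i j, 0 ≤ M0 i j) (hM1 : ∀ i j, 0 ≤ M1 i j)
    (hM2 : ∀ i j, 0 ≤ M2 i j) {p k q : Fin m × ℤ}
    (h1 : ReachBT M0 M1 M2 p k) (h2 : ReachBT M0 M1 M2 k q) : ReachBT M0 M1 M2 p q := by
  obtain ⟨N1, hN1, hp1⟩ := h1
  obtain ⟨N2, hN2, hp2⟩ := h2
  exact ⟨N1 + N2, by omega, matPowR_compose hM0 hM1 hM2 N2 hp1 q hp2⟩

lemma reach_single (hM0 : ∀ i j, 0 ≤ M0 i j) (hM1 : ∀ i j, 0 ≤ M1 i j)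
    (hM2 : ∀ i j, 0 ≤ M2 i j) {p q : Fin m × ℤ} (h : 0 < blockTri M0 M1 M2 p q) :
    ReachBT M0 M1 M2 p q := by
  refine ⟨1, le_refl 1, matPowR_step hM0 hM1 hM2 ?_ h⟩
  show (0:ℝ) < matPowR (blockTri M0 M1 M2) 0 p p
  unfold matPowR
  rw [if_pos rfl]; norm_num

lemma exists_pos_entry {M : Matrix (Fin m) (Fin m) ℝ} (hM : ∀ i j, 0 ≤ M i j)
    (hne : M ≠ 0) : ∃ a b, 0 < M a b := by
  by_contra hc
  push_neg at hc
  apply hne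
  ext a b
  exact le_antisymm (hc a b) (hM a b)

end Aux

/-- If `M₁` is irreducible and aperiodic and `M₀ ≠ 0 ≠ M₂` (all nonnegative),
then the ℤ-indexed block-tridiagonal matrix `M̃` with blocks `M₀, M₁, M₂` is
irreducible and aperiodic. -/
theorem stmt19 {m : ℕ} (M0 M1 M2 : Matrix (Fin m) (Fin m) ℝ)
    (hM0 : ∀ i j, 0 ≤ M0 i j) (hM1 : ∀ i j, 0 ≤ M1 i j) (hM2 : ∀ i j, 0 ≤ M2 i j)
    (hM1irr : ∀ i i' : Fin m, ∃ N : ℕ, 1 ≤ N ∧ 0 < (M1 ^ N) i i')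
    (hM1aper : ∀ i : Fin m, ∀ d : ℕ,
      (∀ N : ℕ, 1 ≤ N → 0 < (M1 ^ N) i i → d ∣ N) → d = 1)
    (hM0ne : M0 ≠ 0) (hM2ne : M2 ≠ 0) :
    (∀ p q : Fin m × ℤ, ∃ N : ℕ, 1 ≤ N ∧ 0 < matPowR (blockTri M0 M1 M2) N p q) ∧
    (∀ p : Fin m × ℤ, ∀ d : ℕ,
      (∀ N : ℕ, 1 ≤ N → 0 < matPowR (blockTri M0 M1 M2) N p p → d ∣ N) → d = 1) := by
  -- same-level reachability
  have Rsame : ∀ (i i' : Fin m) (j : ℤ), ReachBT M0 M1 M2 (i, j) (i', j) := by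
    intro i i' j
    obtain ⟨N, hN, hpos⟩ := hM1irr i i'
    exact ⟨N, hN, lift_M1 hM0 hM1 hM2 N i i' j hpos⟩
  obtain ⟨a2, b2, hab2⟩ := exists_pos_entry hM2 hM2ne
  obtain ⟨a0, b0, hab0⟩ := exists_pos_entry hM0 hM0ne
  -- one step up
  have Rup : ∀ (i : Fin m) (j : ℤ), ReachBT M0 M1 M2 (i, j) (b2, j + 1) := by
    intro i j
    refine reach_trans hM0 hM1 hM2 (Rsame i a2 j) (reach_single hM0 hM1 hM2 ?_)
    show 0 < blockTri M0 M1 M2 (a2, j) (b2, j + 1)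
    unfold blockTri
    rw [if_neg (by omega), if_pos rfl]
    exact hab2
  -- one step down
  have Rdown : ∀ (i : Fin m) (j : ℤ), ReachBT M0 M1 M2 (i, j) (b0, j - 1) := by
    intro i j
    refine reach_trans hM0 hM1 hM2 (Rsame i a0 j) (reach_single hM0 hM1 hM2 ?_)
    show 0 < blockTri M0 M1 M2 (a0, j) (b0, j - 1)
    unfold blockTri
    rw [if_neg (by omega), if_neg (by omega), if_pos rfl]
    exact hab0
  -- climbing up n levels
  have climbUp : ∀ (n : ℕ) (i : Fin m) (j : ℤ), ReachBT M0 M1 M2 (i, j) (b2, j + n) := by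
    intro n
    induction n with
    | zero => intro i j; simpa using Rsame i b2 j
    | succ n ih =>
      intro i j
      have h := reach_trans hM0 hM1 hM2 (ih i j) (Rup b2 (j + n))
      have he : (j + (n : ℤ)) + 1 = j + ((n : ℕ) + 1 : ℕ) := by push_cast; ring
      rwa [he] at h
  have climbDown : ∀ (n : ℕ) (i : Fin m) (j : ℤ), ReachBT M0 M1 M2 (i, j) (b0, j - n) := by
    intro n
    induction n with
    | zero => intro i j; simpa using Rsame i b0 j
    | succ n ih =>
      intro i j
      have h := reach_trans hM0 hM1 hM2 (ih i j) (Rdown b0 (j - n))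
      have he : (j - (n : ℤ)) - 1 = j - ((n : ℕ) + 1 : ℕ) := by push_cast; ring
      rwa [he] at h
  constructor
  · rintro ⟨i, j⟩ ⟨i', j'⟩
    rcases le_or_gt j j' with hle | hlt
    · rcases eq_or_lt_of_le hle with heq | hlt'
      · subst heq; exact Rsame i i' j
      · have h1 := climbUp (j' - j).toNat i j
        have : j + ((j' - j).toNat : ℤ) = j' := by omega
        rw [this] at h1
        exact reach_trans hM0 hM1 hM2 h1 (Rsame b2 i' j')
    · have h1 := climbDown (j - j').toNat i j
      have : j - ((j - j').toNat : ℤ) = j' := by omega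
      rw [this] at h1
      exact reach_trans hM0 hM1 hM2 h1 (Rsame b0 i' j')
  · rintro ⟨i, j⟩ d hd
    apply hM1aper i d
    intro N hN hpos
    exact hd N hN (lift_M1 hM0 hM1 hM2 N i i j hpos)
end
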